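/- Let G act on a set X, fix x₀ ∈ X with stabilizer K, and let τ ∈ G. Suppose d is a G-invariant ℕ-valued distance on X such that d(x₀, τⁿ·x₀) = n for all n ∈ ℕ, and K acts transitively on each sphere centered at x₀. Then G = ⋃_{n∈ℕ} K τⁿ K, and the double cosets K τⁿ K for distinct n are pairwise disjoint. -/
import Mathlib


/-- Abstract Cartan decomposition: G = ⋃ₙ K τⁿ K, with pairwise disjoint double
cosets. -/
theorem stmt_7 {G X : Type*} [Group G] [MulAction G X]
    (d : X → X → ℕ) (hinv : ∀ (g : G) (x y : X), d (g • x) (g • y) = d x y)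
    (x₀ : X) (τ : G) (hτ : ∀ n : ℕ, d x₀ (τ ^ n • x₀) = n)
    (hsph : ∀ y z : X, d x₀ y = d x₀ z →
      ∃ k ∈ MulAction.stabilizer G x₀, k • y = z) :
    (∀ g : G, ∃ n : ℕ, ∃ k₁ ∈ MulAction.stabilizer G x₀,
      ∃ k₂ ∈ MulAction.stabilizer G x₀, g = k₁ * τ ^ n * k₂) ∧
    (∀ m n : ℕ, m ≠ n →
      ∀ k₁ ∈ MulAction.stabilizer G x₀, ∀ k₂ ∈ MulAction.stabilizer G x₀,
      ∀ k₃ ∈ MulAction.stabilizer G x₀, ∀ k₄ ∈ MulAction.stabilizer G x₀,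
      k₁ * τ ^ m * k₂ ≠ k₃ * τ ^ n * k₄) := by
  have key : ∀ (n : ℕ), ∀ k₁ ∈ MulAction.stabilizer G x₀,
      ∀ k₂ ∈ MulAction.stabilizer G x₀, d x₀ ((k₁ * τ ^ n * k₂) • x₀) = n := by
    intro n k₁ hk₁ k₂ hk₂
    have hk₁' : k₁ • x₀ = x₀ := hk₁
    have hk₂' : k₂ • x₀ = x₀ := hk₂
    calc d x₀ ((k₁ * τ ^ n * k₂) • x₀)
        = d (k₁ • x₀) (k₁ • (τ ^ n • (k₂ • x₀))) := by
          rw [hk₁']; congr 1; rw [mul_smul, mul_smul]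
      _ = d x₀ (τ ^ n • x₀) := by rw [hinv, hk₂']
      _ = n := hτ n
  constructor
  · intro g
    set n := d x₀ (g • x₀) with hn
    obtain ⟨k, hk, hkg⟩ := hsph (g • x₀) (τ ^ n • x₀) (by rw [hτ n])
    refine ⟨n, k⁻¹, inv_mem hk, (τ ^ n)⁻¹ * k * g, ?_, by group⟩
    simp only [MulAction.mem_stabilizer_iff, mul_smul, hkg, inv_smul_eq_iff]
  · intro m n hmn k₁ hk₁ k₂ hk₂ k₃ hk₃ k₄ hk₄ heq
    apply hmn
    rw [← key m k₁ hk₁ k₂ hk₂, heq, key n k₃ hk₃ k₄ hk₄]
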